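/- Suppose that the set X achieving the minimum β^M = min{b_{(H,w)}(X) − p(X) : X ⊆ V, e ∩ X ≠ ∅, f ∩ X ≠ ∅} satisfies β^M > 0, under the following hypotheses: p : 2^V → ℤ is skew-supermodular, (H = (V, E), w : E → ℤ₊) is a hypergraph with b_{(H,w)}(Z) ≥ p(Z) for all Z, every hyperedge is contained in some (p, H, w)-tight set, b_{(H,w)}({u}) ≠ 0 for all u ∈ V, and e, f ∈ E are hyperedges whose maximal (p, H, w)-tight sets are distinct. -/

import Mathlib

/-- Coverage function of a weighted hypergraph. -/
def coverage {V : Type*} [DecidableEq V] (E : Finset (Finset V)) (w : Finset V → ℕ)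
    (X : Finset V) : ℤ :=
  ∑ e ∈ E.filter (fun e => (e ∩ X).Nonempty), (w e : ℤ)

/-- Skew-supermodularity. -/
def SkewSupermodular {V : Type*} [DecidableEq V] (p : Finset V → ℤ) : Prop :=
  ∀ X Y : Finset V, p X + p Y ≤ p (X ∩ Y) + p (X ∪ Y) ∨
    p X + p Y ≤ p (X \ Y) + p (Y \ X)

/-!
Two tight sets `X`, `Y` of a hypergraph dominating a skew-supermodular `p` uncross: either
`X ∪ Y` is tight (submodularity of the coverage function), or `X \ Y` and `Y \ X` are tight
(monotonicity). If some hyperedge `g ⊆ Y` meets `X`, it is counted in `b X` but not in `b (X \ Y)`,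
which rules out the second alternative. Hence the maximal tight set `M` containing `g` absorbs
every tight set meeting `g`. Now a tight `X` meeting `e` and `f` would lie in both maximal tight
sets `Me` and `Mf`; then `Mf` meets `e` and `Me` meets `f`, so each absorbs the other and
`Me = Mf`.
-/

open Finset

section Coverage

variable {V : Type*} [DecidableEq V] {E : Finset (Finset V)} {w : Finset V → ℕ}

theorem coverage_mono {X Y : Finset V} (h : X ⊆ Y) : coverage E w X ≤ coverage E w Y :=
  sum_le_sum_of_subset_of_nonneg
    (monotone_filter_right E fun _ _ => Nonempty.mono (inter_subset_inter_left h))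
    fun _ _ _ => Int.natCast_nonneg _

theorem coverage_add_weight_le {X Y g : Finset V} (hg : g ∈ E) (hXY : X ⊆ Y)
    (hgX : Disjoint g X) (hgY : (g ∩ Y).Nonempty) :
    coverage E w X + w g ≤ coverage E w Y := by
  have hsub : E.filter (fun e => (e ∩ X).Nonempty) ⊆ E.filter (fun e => (e ∩ Y).Nonempty) :=
    monotone_filter_right E fun _ _ => Nonempty.mono (inter_subset_inter_left hXY)
  have hgmem : g ∈ E.filter (fun e => (e ∩ Y).Nonempty) \ E.filter (fun e => (e ∩ X).Nonempty) := by
    simp [hg, hgY, disjoint_iff_inter_eq_empty.1 hgX]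
  rw [coverage, coverage, ← sum_sdiff hsub, add_comm]
  gcongr
  exact single_le_sum (fun _ _ => Int.natCast_nonneg _) hgmem

theorem coverage_inter_add_coverage_union_le (X Y : Finset V) :
    coverage E w (X ∩ Y) + coverage E w (X ∪ Y) ≤ coverage E w X + coverage E w Y := by
  simp only [coverage, sum_filter, ← sum_add_distrib]
  refine sum_le_sum fun g _ => ?_
  have hX : (g ∩ (X ∩ Y)).Nonempty → (g ∩ X).Nonempty :=
    fun h => h.mono (inter_subset_inter_left inter_subset_left)
  have hY : (g ∩ (X ∩ Y)).Nonempty → (g ∩ Y).Nonempty :=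
    fun h => h.mono (inter_subset_inter_left inter_subset_right)
  have hXY : (g ∩ (X ∪ Y)).Nonempty ↔ (g ∩ X).Nonempty ∨ (g ∩ Y).Nonempty := by
    rw [inter_union_distrib_left, union_nonempty]
  split_ifs <;> simp_all

end Coverage

section Tight

variable {V : Type*} [DecidableEq V]

def IsTight (E : Finset (Finset V)) (w : Finset V → ℕ) (p : Finset V → ℤ) (X : Finset V) :
    Prop :=
  coverage E w X = p X

def IsMaxTight (E : Finset (Finset V)) (w : Finset V → ℕ) (p : Finset V → ℤ)
    (g M : Finset V) : Prop :=
  g ⊆ M ∧ IsTight E w p M ∧ ∀ M' : Finset V, IsTight E w p M' → M ⊆ M' → M = M'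

variable {E : Finset (Finset V)} {w : Finset V → ℕ} {p : Finset V → ℤ} {g X Y M : Finset V}

theorem IsTight.union_of_subset (hp : SkewSupermodular p)
    (hcover : ∀ Z, p Z ≤ coverage E w Z) (hw : ∀ e ∈ E, 0 < w e)
    (hX : IsTight E w p X) (hY : IsTight E w p Y) (hg : g ∈ E) (hgX : (g ∩ X).Nonempty)
    (hgY : g ⊆ Y) : IsTight E w p (X ∪ Y) := by
  unfold IsTight at *
  rcases hp X Y with hsup | hskew
  · have := coverage_inter_add_coverage_union_le (E := E) (w := w) X Y
    linarith [hcover (X ∩ Y), hcover (X ∪ Y)]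
  · have hXY := coverage_add_weight_le (w := w) hg sdiff_subset
      (disjoint_sdiff.mono_left hgY) hgX
    have hYX := coverage_mono (E := E) (w := w) (sdiff_subset : Y \ X ⊆ Y)
    have hwg : (0 : ℤ) < w g := by exact_mod_cast hw g hg
    linarith [hcover (X \ Y), hcover (Y \ X)]

theorem IsMaxTight.subset_of_isTight (hp : SkewSupermodular p)
    (hcover : ∀ Z, p Z ≤ coverage E w Z) (hw : ∀ e ∈ E, 0 < w e)
    (hM : IsMaxTight E w p g M) (hg : g ∈ E) (hX : IsTight E w p X) (hgX : (g ∩ X).Nonempty) :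
    X ⊆ M := by
  have hXM := hM.2.2 _ (hX.union_of_subset hp hcover hw hM.2.1 hg hgX hM.1) subset_union_right
  exact hXM ▸ subset_union_left

theorem exists_isMaxTight [Fintype V] (h : ∃ X, g ⊆ X ∧ IsTight E w p X) :
    ∃ M, IsMaxTight E w p g M := by
  obtain ⟨X, hX⟩ := h
  obtain ⟨M, -, hM, hmax⟩ := Finite.exists_le_maximal (p := fun M => g ⊆ M ∧ IsTight E w p M) hX
  exact ⟨M, hM.1, hM.2, fun M' hM' hMM' =>
    le_antisymm hMM' (hmax ⟨hM.1.trans hMM', hM'⟩ hMM')⟩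

end Tight

theorem betaM_pos_general {V : Type*} [Fintype V] [DecidableEq V]
    (E : Finset (Finset V)) (w : Finset V → ℕ) (p : Finset V → ℤ)
    (hw : ∀ e ∈ E, 0 < w e)
    (hp : SkewSupermodular p)
    (hcover : ∀ Z : Finset V, p Z ≤ coverage E w Z)
    (htight : ∀ e ∈ E, ∃ X : Finset V, e ⊆ X ∧ coverage E w X = p X)
    (e f : Finset V) (he : e ∈ E) (hf : f ∈ E)
    (hdistinct : ∀ Me Mf : Finset V,
      (e ⊆ Me ∧ coverage E w Me = p Me ∧
        ∀ M' : Finset V, coverage E w M' = p M' → Me ⊆ M' → Me = M') →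
      (f ⊆ Mf ∧ coverage E w Mf = p Mf ∧
        ∀ M' : Finset V, coverage E w M' = p M' → Mf ⊆ M' → Mf = M') →
      Me ≠ Mf) :
    ∀ X : Finset V, (e ∩ X).Nonempty → (f ∩ X).Nonempty →
      0 < coverage E w X - p X := by
  intro X heX hfX
  obtain ⟨Me, hMe⟩ := exists_isMaxTight (htight e he)
  obtain ⟨Mf, hMf⟩ := exists_isMaxTight (htight f hf)
  refine lt_of_le_of_ne (sub_nonneg.2 (hcover X)) fun hX => hdistinct Me Mf hMe hMf ?_
  have hXt : IsTight E w p X := sub_eq_zero.1 hX.symm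
  have hXMe := hMe.subset_of_isTight hp hcover hw he hXt heX
  have hXMf := hMf.subset_of_isTight hp hcover hw hf hXt hfX
  exact subset_antisymm
    (hMf.subset_of_isTight hp hcover hw hf hMe.2.1 (hfX.mono (inter_subset_inter_left hXMe)))
    (hMe.subset_of_isTight hp hcover hw he hMf.2.1 (heX.mono (inter_subset_inter_left hXMf)))

/-- If `e` and `f` are hyperedges whose maximal tight sets are distinct, then
`β^M = min { b(X) − p(X) : X intersects both e and f }` is positive, i.e. every
set intersecting both `e` and `f` satisfies `b(X) − p(X) > 0`. -/
theorem betaM_pos {V : Type*} [Fintype V] [DecidableEq V]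
    (E : Finset (Finset V)) (w : Finset V → ℕ) (p : Finset V → ℤ)
    (hw : ∀ e ∈ E, 0 < w e)
    (hp : SkewSupermodular p)
    (hcover : ∀ Z : Finset V, p Z ≤ coverage E w Z)
    (htight : ∀ e ∈ E, ∃ X : Finset V, e ⊆ X ∧ coverage E w X = p X)
    (hdeg : ∀ u : V, coverage E w {u} ≠ 0)
    (e f : Finset V) (he : e ∈ E) (hf : f ∈ E)
    (hdistinct : ∀ Me Mf : Finset V,
      (e ⊆ Me ∧ coverage E w Me = p Me ∧
        ∀ M' : Finset V, coverage E w M' = p M' → Me ⊆ M' → Me = M') →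
      (f ⊆ Mf ∧ coverage E w Mf = p Mf ∧
        ∀ M' : Finset V, coverage E w M' = p M' → Mf ⊆ M' → Mf = M') →
      Me ≠ Mf) :
    ∀ X : Finset V, (e ∩ X).Nonempty → (f ∩ X).Nonempty →
      0 < coverage E w X - p X :=
  betaM_pos_general E w p hw hp hcover htight e f he hf hdistinct
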